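/- Let U and U' be 2^n × 2^n unitary matrices over ℂ with (1/2^n)‖U − U'‖₁ ≤ ε for some real ε ≥ 0. Let r ≥ 1 and let V₀, V₁, …, V_r be 2^n × 2^n unitary matrices. Define A = V₀·U·V₁·U·V₂⋯U·V_r and A' = V₀·U'·V₁·U'·V₂⋯U'·V_r (the alternating products containing r copies of the oracle matrix). Then (1/2^n)|Tr(Aᴴ A')| ≥ 1 − ε − (r − 1)·√(2ε). -/

import Mathlib

open Matrix
open scoped ComplexOrder

/-- The trace norm (Schatten 1-norm) of a complex square matrix: the trace of the
positive semidefinite square root of `Mᴴ * M`. -/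
noncomputable def traceNorm {m : Type*} [Fintype m] [DecidableEq m] (M : Matrix m m ℂ) : ℝ :=
  ((((Matrix.posSemidef_conjTranspose_mul_self M).1.eigenvectorUnitary : Matrix m m ℂ) *
      diagonal ((fun x : ℝ => (x : ℂ)) ∘ (√·) ∘ (Matrix.posSemidef_conjTranspose_mul_self M).1.eigenvalues) *
      (star (Matrix.posSemidef_conjTranspose_mul_self M).1.eigenvectorUnitary : Matrix m m ℂ)).trace).re

/-!
Hybrid argument: replacing the oracle `U` by `U'` one query at a time changes `Tr(Aᴴ A')` at
each step by `Tr(W (U - U'))` for a unitary `W`, and `|Tr(W M)| ≤ ‖M‖₁` by Cauchy–Schwarz in an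
eigenbasis of `Mᴴ M`. Hence the fidelity is at least `1 - r ε`, which dominates the claimed
bound because `ε ≤ √(2ε)` whenever that bound is positive.
-/

namespace Matrix

variable {𝕜 l m : Type*} [RCLike 𝕜] [Fintype m]

theorem norm_mul_apply_le_sqrt_mul_sqrt (X : Matrix l m 𝕜) (Y : Matrix m l 𝕜) (i : l) :
    ‖(X * Y) i i‖ ≤ √(∑ j, ‖X i j‖ ^ 2) * √(∑ j, ‖Y j i‖ ^ 2) := by
  rw [mul_apply]
  calc ‖∑ j, X i j * Y j i‖ ≤ ∑ j, ‖X i j‖ * ‖Y j i‖ :=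
        (norm_sum_le _ _).trans_eq (by simp only [norm_mul])
    _ ≤ _ := Real.sum_mul_le_sqrt_mul_sqrt _ _ _

theorem conjTranspose_mul_self_apply_self (Y : Matrix m l 𝕜) (i : l) :
    (Yᴴ * Y) i i = ((∑ j, ‖Y j i‖ ^ 2 : ℝ) : 𝕜) := by
  simp only [mul_apply, conjTranspose_apply, RCLike.star_def, RCLike.conj_mul]
  push_cast
  rfl

theorem mul_conjTranspose_self_apply_self (X : Matrix l m 𝕜) (i : l) :
    (X * Xᴴ) i i = ((∑ j, ‖X i j‖ ^ 2 : ℝ) : 𝕜) := by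
  simpa using conjTranspose_mul_self_apply_self Xᴴ i

theorem sum_norm_sq_apply_eq_one_of_mem_unitaryGroup [DecidableEq m] {X : Matrix m m 𝕜}
    (hX : X ∈ unitaryGroup m 𝕜) (i : m) : ∑ j, ‖X i j‖ ^ 2 = 1 := by
  have h := mul_conjTranspose_self_apply_self X i
  rw [← star_eq_conjTranspose, Unitary.mul_star_self_of_mem hX, one_apply_eq] at h
  exact_mod_cast h.symm

end Matrix

section TraceNorm

variable {m : Type*} [Fintype m] [DecidableEq m]

theorem traceNorm_eq_sum_sqrt_eigenvalues (M : Matrix m m ℂ) :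
    traceNorm M = ∑ i, √((posSemidef_conjTranspose_mul_self M).1.eigenvalues i) := by
  rw [traceNorm, trace_mul_cycle, Unitary.star_mul_self_of_mem
    (posSemidef_conjTranspose_mul_self M).1.eigenvectorUnitary.2, one_mul, trace_diagonal]
  simp

theorem norm_trace_mul_le_traceNorm {W : Matrix m m ℂ} (hW : W ∈ unitaryGroup m ℂ)
    (M : Matrix m m ℂ) : ‖(W * M).trace‖ ≤ traceNorm M := by
  set hMM := (posSemidef_conjTranspose_mul_self M).1
  set P : Matrix m m ℂ := (hMM.eigenvectorUnitary : Matrix m m ℂ)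
  have hP : P ∈ unitaryGroup m ℂ := hMM.eigenvectorUnitary.2
  have hPW : Pᴴ * W ∈ unitaryGroup m ℂ := mul_mem (Unitary.star_mem hP) hW
  have hdiag : (M * P)ᴴ * (M * P) = diagonal (RCLike.ofReal ∘ hMM.eigenvalues) := by
    have h := hMM.conjStarAlgAut_star_eigenvectorUnitary
    rw [Unitary.conjStarAlgAut_star_apply] at h
    rw [← h, conjTranspose_mul]
    simp only [P, star_eq_conjTranspose, Matrix.mul_assoc]
  have htrace : (W * M).trace = ((Pᴴ * W) * (M * P)).trace := by
    rw [← Matrix.mul_assoc, trace_mul_cycle, ← star_eq_conjTranspose, ← Matrix.mul_assoc,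
      Unitary.mul_star_self_of_mem hP, Matrix.one_mul]
  have hcol (i : m) : ∑ j, ‖(M * P) j i‖ ^ 2 = hMM.eigenvalues i := by
    have h := conjTranspose_mul_self_apply_self (M * P) i
    rw [hdiag, diagonal_apply_eq, Function.comp_apply] at h
    exact_mod_cast h.symm
  calc ‖(W * M).trace‖ ≤ ∑ i, ‖((Pᴴ * W) * (M * P)) i i‖ := htrace ▸ norm_sum_le _ _
    _ ≤ ∑ i, √(hMM.eigenvalues i) := by
      gcongr with i
      refine (norm_mul_apply_le_sqrt_mul_sqrt _ _ i).trans_eq ?_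
      rw [sum_norm_sq_apply_eq_one_of_mem_unitaryGroup hPW, hcol, Real.sqrt_one, one_mul]
    _ = traceNorm M := (traceNorm_eq_sum_sqrt_eigenvalues M).symm

end TraceNorm

section Hybrid

variable {m : Type*} [Fintype m] [DecidableEq m] {U U' : Matrix m m ℂ}

theorem norm_trace_sub_trace_mul_mul_le_traceNorm {B B' V : Matrix m m ℂ}
    (hB : B ∈ unitaryGroup m ℂ) (hB' : B' ∈ unitaryGroup m ℂ) (hU : U ∈ unitaryGroup m ℂ)
    (hV : V ∈ unitaryGroup m ℂ) :
    ‖(Bᴴ * B').trace - ((B * (U * V))ᴴ * (B' * (U' * V))).trace‖ ≤ traceNorm (U - U') := by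
  set W := Uᴴ * (Bᴴ * B')
  have hW : W ∈ unitaryGroup m ℂ :=
    mul_mem (Unitary.star_mem hU) (mul_mem (Unitary.star_mem hB) hB')
  have hbefore : (Bᴴ * B').trace = (W * U).trace := by
    conv_rhs => rw [Matrix.mul_assoc, trace_mul_comm, Matrix.mul_assoc,
      ← star_eq_conjTranspose U, Unitary.mul_star_self_of_mem hU, Matrix.mul_one]
  have hafter : ((B * (U * V))ᴴ * (B' * (U' * V))).trace = (W * U').trace := by
    rw [show (B * (U * V))ᴴ * (B' * (U' * V)) = Vᴴ * (W * U' * V) by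
        simp only [W, conjTranspose_mul, Matrix.mul_assoc],
      trace_mul_comm, Matrix.mul_assoc, ← star_eq_conjTranspose,
      Unitary.mul_star_self_of_mem hV, Matrix.mul_one]
  rw [hbefore, hafter, ← trace_sub, ← Matrix.mul_sub]
  exact norm_trace_mul_le_traceNorm hW _

theorem norm_trace_sub_trace_prod_map_mul_le (hU : U ∈ unitaryGroup m ℂ)
    (hU' : U' ∈ unitaryGroup m ℂ) (Vs : List (Matrix m m ℂ))
    (hVs : ∀ V ∈ Vs, V ∈ unitaryGroup m ℂ) {B B' : Matrix m m ℂ}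
    (hB : B ∈ unitaryGroup m ℂ) (hB' : B' ∈ unitaryGroup m ℂ) :
    ‖(Bᴴ * B').trace - ((B * (Vs.map (U * ·)).prod)ᴴ * (B' * (Vs.map (U' * ·)).prod)).trace‖ ≤
      Vs.length * traceNorm (U - U') := by
  induction Vs generalizing B B' with
  | nil => simp
  | cons V Vs ih =>
    have hV := hVs V List.mem_cons_self
    rw [List.map_cons, List.prod_cons, List.map_cons, List.prod_cons, ← Matrix.mul_assoc B,
      ← Matrix.mul_assoc B', List.length_cons, Nat.cast_succ, add_one_mul, add_comm]
    calc _ ≤ _ := norm_sub_le_norm_sub_add_norm_sub _ ((B * (U * V))ᴴ * (B' * (U' * V))).trace _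
      _ ≤ _ := add_le_add (norm_trace_sub_trace_mul_mul_le_traceNorm hB hB' hU hV)
        (ih (fun W hW => hVs W (List.mem_cons_of_mem V hW))
          (mul_mem hB (mul_mem hU hV)) (mul_mem hB' (mul_mem hU' hV)))

end Hybrid

theorem one_sub_sub_mul_sqrt_two_mul_le_max {r ε : ℝ} (hr : 1 ≤ r) (hε : 0 ≤ ε) :
    1 - ε - (r - 1) * √(2 * ε) ≤ max 0 (1 - r * ε) := by
  rcases le_or_gt ε 2 with hε2 | hε2
  · have hε_le : ε ≤ √(2 * ε) := Real.le_sqrt_of_sq_le (by nlinarith)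
    have := mul_le_mul_of_nonneg_left hε_le (sub_nonneg.mpr hr)
    exact le_max_of_le_right (by linarith)
  · have := mul_nonneg (sub_nonneg.mpr hr) (Real.sqrt_nonneg (2 * ε))
    exact le_max_of_le_left (by linarith)

theorem fidelity_lower_bound_hybrid (n : ℕ) (ε : ℝ) (hε : 0 ≤ ε)
    (U U' : Matrix (Fin (2 ^ n)) (Fin (2 ^ n)) ℂ)
    (hU : U ∈ Matrix.unitaryGroup (Fin (2 ^ n)) ℂ)
    (hU' : U' ∈ Matrix.unitaryGroup (Fin (2 ^ n)) ℂ)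
    (hUU' : (1 / 2 ^ n) * traceNorm (U - U') ≤ ε)
    (r : ℕ) (hr : 1 ≤ r)
    (V : ℕ → Matrix (Fin (2 ^ n)) (Fin (2 ^ n)) ℂ)
    (hV : ∀ i ≤ r, V i ∈ Matrix.unitaryGroup (Fin (2 ^ n)) ℂ)
    (A A' : Matrix (Fin (2 ^ n)) (Fin (2 ^ n)) ℂ)
    (hA : A = V 0 * ((List.range r).map fun i => U * V (i + 1)).prod)
    (hA' : A' = V 0 * ((List.range r).map fun i => U' * V (i + 1)).prod) :
    1 - ε - ((r : ℝ) - 1) * Real.sqrt (2 * ε) ≤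
      (1 / 2 ^ n) * ‖(Aᴴ * A').trace‖ := by
  set Vs := (List.range r).map fun i => V (i + 1)
  have hVs : ∀ W ∈ Vs, W ∈ unitaryGroup (Fin (2 ^ n)) ℂ := by
    simp only [Vs, List.mem_map, List.mem_range]
    rintro _ ⟨i, hi, rfl⟩
    exact hV (i + 1) hi
  have hV₀ := hV 0 (Nat.zero_le r)
  have hbound := norm_trace_sub_trace_prod_map_mul_le hU hU' Vs hVs hV₀ hV₀
  simp only [Vs, List.map_map, Function.comp_def] at hbound
  rw [← hA, ← hA', ← star_eq_conjTranspose,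
    Unitary.star_mul_self_of_mem hV₀, trace_one, Fintype.card_fin, List.length_map,
    List.length_range, Nat.cast_pow, Nat.cast_ofNat] at hbound
  have h2n : (0 : ℝ) < 2 ^ n := by positivity
  have hUU'_mul : r * traceNorm (U - U') ≤ r * (2 ^ n * ε) := by
    rw [one_div, inv_mul_le_iff₀ h2n] at hUU'
    exact mul_le_mul_of_nonneg_left hUU' r.cast_nonneg
  have hfid : 1 - r * ε ≤ (1 / 2 ^ n) * ‖(Aᴴ * A').trace‖ := by
    have hnorm := (norm_sub_norm_le _ _).trans hbound
    rw [norm_pow, Complex.norm_ofNat] at hnorm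
    rw [one_div, le_inv_mul_iff₀ h2n]
    linarith
  exact (one_sub_sub_mul_sqrt_two_mul_le_max (by exact_mod_cast hr) hε).trans
    (max_le (by positivity) hfid)
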